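/- For any r with 0 < r ≤ 1, the function g(x) = x - arcsin(√r · sin x) is convex on [0, π/2], and hence attains its maximum on [0, π/2] at one of the endpoints 0 or π/2. -/

import Mathlib

/-!
Write `g x = x - arcsin (c * sin x)` with `c = √r ∈ [0, 1]`. On `(0, π/2)` the derivative of
`arcsin (c * sin x)` is `c * cos x / √(1 - c² sin² x)`, and the square of this quotient,
`c² (1 - s²) / (1 - c² s²)` with `s = sin x`, decreases in `s` because `c² ≤ 1`. So
`arcsin (c * sin x)` is concave, `g` is convex, and a convex function on an interval is maximal
at an endpoint.
-/

open Real Set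

lemma one_sub_sq_mul_one_sub_mul_sq_le {a s t : ℝ} (ha : a ≤ 1) (hst : s ^ 2 ≤ t ^ 2) :
    (1 - t ^ 2) * (1 - a * s ^ 2) ≤ (1 - s ^ 2) * (1 - a * t ^ 2) := by
  nlinarith [mul_nonneg (sub_nonneg.2 ha) (sub_nonneg.2 hst)]

lemma sin_mem_Ico_of_mem_Ico {x : ℝ} (hx : x ∈ Ico 0 (π / 2)) : sin x ∈ Ico 0 1 :=
  ⟨sin_nonneg_of_nonneg_of_le_pi hx.1 (by linarith [hx.2, pi_pos]), by
    simpa using strictMonoOn_sin ⟨by linarith [hx.1, pi_pos], hx.2.le⟩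
      ⟨by linarith [pi_pos], le_rfl⟩ hx.2⟩

lemma antitoneOn_cos_div_sqrt_one_sub_mul_sin_sq {c : ℝ} (hc : c ^ 2 ≤ 1) :
    AntitoneOn (fun x => cos x / √(1 - (c * sin x) ^ 2)) (Ico 0 (π / 2)) := by
  have hpos : ∀ x ∈ Ico 0 (π / 2), 0 < 1 - (c * sin x) ^ 2 := fun x hx => by
    obtain ⟨hs₀, hs₁⟩ := sin_mem_Ico_of_mem_Ico hx
    have hsq : sin x ^ 2 < 1 := pow_lt_one₀ hs₀ hs₁ two_ne_zero
    linarith [mul_pow c (sin x) 2, mul_le_of_le_one_left (sq_nonneg (sin x)) hc]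
  have hcos : ∀ x ∈ Ico 0 (π / 2), 0 ≤ cos x := fun x hx =>
    cos_nonneg_of_mem_Icc ⟨by linarith [hx.1, pi_pos], hx.2.le⟩
  intro x hx y hy hxy
  have hsin : sin x ^ 2 ≤ sin y ^ 2 :=
    pow_le_pow_left₀ (sin_mem_Ico_of_mem_Ico hx).1
      (strictMonoOn_sin.monotoneOn ⟨by linarith [hx.1, pi_pos], hx.2.le⟩
        ⟨by linarith [hy.1, pi_pos], hy.2.le⟩ hxy) 2
  dsimp only
  rw [div_le_div_iff₀ (sqrt_pos.2 (hpos y hy)) (sqrt_pos.2 (hpos x hx)),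
    ← sq_le_sq₀ (by have := hcos y hy; positivity) (by have := hcos x hx; positivity),
    mul_pow (cos y), mul_pow (cos x), sq_sqrt (hpos x hx).le, sq_sqrt (hpos y hy).le,
    cos_sq', cos_sq', mul_pow c, mul_pow c]
  exact one_sub_sq_mul_one_sub_mul_sq_le hc hsin

lemma hasDerivAt_arcsin_mul_sin {c x : ℝ} (h₁ : c * sin x ≠ -1) (h₂ : c * sin x ≠ 1) :
    HasDerivAt (fun x => arcsin (c * sin x)) (c * (cos x / √(1 - (c * sin x) ^ 2))) x := by
  have h := (hasDerivAt_arcsin h₁ h₂).comp x ((hasDerivAt_sin x).const_mul c)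
  exact h.congr_deriv (by ring)

theorem concaveOn_arcsin_mul_sin {c : ℝ} (hc₀ : 0 ≤ c) (hc₁ : c ≤ 1) :
    ConcaveOn ℝ (Icc 0 (π / 2)) (fun x => arcsin (c * sin x)) := by
  have hderiv : ∀ x ∈ Ioo 0 (π / 2),
      HasDerivAt (fun x => arcsin (c * sin x)) (c * (cos x / √(1 - (c * sin x) ^ 2))) x := by
    intro x hx
    obtain ⟨hs₀, hs₁⟩ := sin_mem_Ico_of_mem_Ico (Ioo_subset_Ico_self hx)
    have h₀ : 0 ≤ c * sin x := mul_nonneg hc₀ hs₀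
    have h₁ : c * sin x < 1 := (mul_le_of_le_one_left hs₀ hc₁).trans_lt hs₁
    exact hasDerivAt_arcsin_mul_sin (by linarith) h₁.ne
  have hanti := antitoneOn_cos_div_sqrt_one_sub_mul_sin_sq (pow_le_one₀ hc₀ hc₁)
  refine AntitoneOn.concaveOn_of_deriv (convex_Icc _ _) (by fun_prop) ?_ ?_ <;> rw [interior_Icc]
  · exact fun x hx => (hderiv x hx).differentiableAt.differentiableWithinAt
  · intro x hx y hy hxy
    rw [(hderiv x hx).deriv, (hderiv y hy).deriv]
    exact mul_le_mul_of_nonneg_left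
      (hanti (Ioo_subset_Ico_self hx) (Ioo_subset_Ico_self hy) hxy) hc₀

theorem sub_arcsin_sqrt_mul_sin_convexOn_and_max_at_endpoints_general (r : ℝ) (hr1 : r ≤ 1) :
    ConvexOn ℝ (Set.Icc 0 (π / 2))
      (fun x : ℝ => x - Real.arcsin (Real.sqrt r * Real.sin x)) ∧
    ∀ x ∈ Set.Icc 0 (π / 2),
      x - Real.arcsin (Real.sqrt r * Real.sin x) ≤
        max (0 - Real.arcsin (Real.sqrt r * Real.sin 0))
          (π / 2 - Real.arcsin (Real.sqrt r * Real.sin (π / 2))) := by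
  have hconv : ConvexOn ℝ (Icc 0 (π / 2)) (fun x : ℝ => x - arcsin (√r * sin x)) :=
    (convexOn_id (convex_Icc _ _)).sub
      (concaveOn_arcsin_mul_sin (sqrt_nonneg r) (sqrt_le_one.2 hr1))
  refine ⟨hconv, fun x hx => hconv.le_max_of_mem_Icc ?_ ?_ hx⟩ <;> simp [pi_div_two_pos.le]

theorem sub_arcsin_sqrt_mul_sin_convexOn_and_max_at_endpoints (r : ℝ) (hr0 : 0 < r) (hr1 : r ≤ 1) :
    ConvexOn ℝ (Set.Icc 0 (π / 2))
      (fun x : ℝ => x - Real.arcsin (Real.sqrt r * Real.sin x)) ∧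
    ∀ x ∈ Set.Icc 0 (π / 2),
      x - Real.arcsin (Real.sqrt r * Real.sin x) ≤
        max (0 - Real.arcsin (Real.sqrt r * Real.sin 0))
          (π / 2 - Real.arcsin (Real.sqrt r * Real.sin (π / 2))) :=
  sub_arcsin_sqrt_mul_sin_convexOn_and_max_at_endpoints_general r hr1
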